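/- Let S1, S2, P' = x_1,…,x_{p'}, Q' = y_1,…,y_{q'} be as in the stated setting, and let i < p' and 1 < j ≤ q' be indices such that the pair (x_i, Q[1,j−1]) is nonintersecting. Then rr(S1^{x_i}, S2^{y_1}) = max{ rr(S1^{x_i}, S2^{y_j}), rr(S1^{x_{i+1}}, S2^{y_1}), mm(X_i, y_j) + max_{j' ∈ [1,j−1]} mm(x_{i+1}, Y_{j'}) }. -/

import Mathlib

/-- A leaf-labeled rooted tree: either a labeled leaf, or an internal
vertex with a list of subtrees. -/
inductive ETree (L : Type) : Type where
  | leaf : L → ETree L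
  | node : List (ETree L) → ETree L

namespace ETree

variable {L : Type} [DecidableEq L]

/-- The list of leaf labels of a tree. -/
def labelList : ETree L → List L
  | leaf a => [a]
  | node ts => ts.attach.flatMap fun ⟨t, _⟩ => labelList t

/-- The label set of a tree: the set of its leaf labels. -/
def labelSet (t : ETree L) : Finset L := (labelList t).toFinset

/-- The list of children (as subtrees) of the root of a tree. -/
def children : ETree L → List (ETree L)
  | leaf _ => []
  | node ts => ts

/-- A rooted tree is homeomorphic if every internal vertex has at least two children. -/
inductive Homeo : ETree L → Prop where
  | leaf (a : L) : Homeo (leaf a)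
  | node (ts : List (ETree L)) (hlen : 2 ≤ ts.length) (h : ∀ t ∈ ts, Homeo t) :
      Homeo (node ts)

/-- An evolutionary tree: a homeomorphic rooted tree whose leaves carry distinct labels. -/
def IsEvolutionary (t : ETree L) : Prop := Homeo t ∧ (labelList t).Nodup

/-- `restrict t s` is the homeomorphic version `t‖s` of the tree obtained from `t` by
deleting all leaves with labels outside `s` (contracting away all vertices that are
not leaves or lowest common ancestors of two leaves); `none` if nothing remains. -/
def restrict : ETree L → Finset L → Option (ETree L)
  | leaf a, s => if a ∈ s then some (leaf a) else none
  | node ts, s =>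
      match ts.attach.filterMap (fun ⟨t, _⟩ => restrict t s) with
      | [] => none
      | [u] => some u
      | us => some (node us)

/-- Label-preserving isomorphism of leaf-labeled rooted trees. -/
inductive Iso : ETree L → ETree L → Prop where
  | leaf (a : L) : Iso (leaf a) (leaf a)
  | node (ts us : List (ETree L)) (e : Fin ts.length ≃ Fin us.length)
      (h : ∀ i : Fin ts.length, Iso (ts.get i) (us.get (e i))) :
      Iso (node ts) (node us)

/-- Isomorphism of possibly-empty trees. -/
def IsoO : Option (ETree L) → Option (ETree L) → Prop
  | none, none => True
  | some t, some u => Iso t u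
  | _, _ => False

/-- `rr T₁ T₂`: the number of leaves in a maximum agreement subtree of `T₁` and `T₂`,
i.e. the maximum cardinality of a subset `s` of the common labels such that `T₁‖s`
and `T₂‖s` are label-preservingly isomorphic. -/
noncomputable def rr (t₁ t₂ : ETree L) : ℕ :=
  sSup {k | ∃ s : Finset L, s ⊆ labelSet t₁ ∩ labelSet t₂ ∧ s.card = k ∧
    IsoO (restrict t₁ s) (restrict t₂ s)}

end ETree

namespace ETree

variable {L : Type} [DecidableEq L]

noncomputable instance : DecidableEq (ETree L) := Classical.decEq _

/-- `mm U V`: the maximum weight of a matching of the complete bipartite graph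
`(U, V, U×V)` in which the edge `(u,v)` has weight `rr u v` (note that in our
representation a vertex of a tree is identified with the subtree it roots, so the
weight of `(u,v)` is `rr` of the two rooted subtrees). -/
noncomputable def mm (U V : Finset (ETree L)) : ℕ :=
  sSup {w | ∃ M : Finset (ETree L × ETree L),
    (∀ p ∈ M, p.1 ∈ U ∧ p.2 ∈ V) ∧
    (∀ p ∈ M, ∀ q ∈ M, p ≠ q → p.1 ≠ q.1 ∧ p.2 ≠ q.2) ∧
    w = ∑ p ∈ M, rr p.1 p.2}

/-- `mmb U V x y`: the maximum weight of a matching of the complete bipartite graph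
`(U, V, U×V)` (edge `(u,v)` weighted by `rr u v`) that does not use the edge `(x,y)`. -/
noncomputable def mmb (U V : Finset (ETree L)) (x y : ETree L) : ℕ :=
  sSup {w | ∃ M : Finset (ETree L × ETree L),
    (∀ p ∈ M, p.1 ∈ U ∧ p.2 ∈ V) ∧
    (∀ p ∈ M, ∀ q ∈ M, p ≠ q → p.1 ≠ q.1 ∧ p.2 ≠ q.2) ∧
    (x, y) ∉ M ∧
    w = ∑ p ∈ M, rr p.1 p.2}

/-- `IsSubtree s t`: `s` occurs as a rooted subtree `t^u` of `t` (vertices of a tree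
with distinct leaf labels are identified with the subtrees they root). -/
inductive IsSubtree : ETree L → ETree L → Prop where
  | refl (t : ETree L) : IsSubtree t t
  | child {s c : ETree L} {ts : List (ETree L)} (hc : c ∈ ts) (h : IsSubtree s c) :
      IsSubtree s (node ts)

end ETree

/-- A root path `x₁,…,x_len` of a tree: a vertex-simple path starting at the root and
descending, containing no leaf of the tree.  Vertices are identified with the subtrees
they root, so `vert i` is the subtree `S^{xᵢ}` rooted at the `i`-th vertex of the path
(indices run from `1` to `len`). -/
structure RootPath (L : Type) where
  /-- The ambient tree. -/
  tree : ETree L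
  /-- The number of vertices of the path. -/
  len : ℕ
  /-- The subtree rooted at the `i`-th vertex of the path, for `1 ≤ i ≤ len`. -/
  vert : ℕ → ETree L
  len_pos : 1 ≤ len
  first : vert 1 = tree
  /-- The path contains no leaf of the tree. -/
  no_leaf : ∀ i, 1 ≤ i → i ≤ len → ∃ ts, vert i = ETree.node ts
  /-- Each path vertex after the first is a child of the previous one. -/
  step : ∀ i, 1 ≤ i → i < len → vert (i + 1) ∈ (vert i).children

namespace RootPath

variable {L : Type} [DecidableEq L]

/-- `offPath P i` is the set of children of the path vertex `xᵢ` that are not on the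
path (the set `Xᵢ`). -/
noncomputable def offPath (P : RootPath L) (i : ℕ) : Finset (ETree L) :=
  if i < P.len then ((P.vert i).children.toFinset).erase (P.vert (i + 1))
  else (P.vert i).children.toFinset

end RootPath

/-- `Intersecting P Q i j`: the pair `(xᵢ, y_j)` is intersecting, i.e. `S₁^u` and `S₂^v`
share a leaf label for some `u ∈ Xᵢ` and `v ∈ Y_j`. -/
def Intersecting {L : Type} [DecidableEq L] (P Q : RootPath L) (i j : ℕ) : Prop :=
  ∃ u ∈ P.offPath i, ∃ v ∈ Q.offPath j,
    (ETree.labelSet u ∩ ETree.labelSet v).Nonempty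

/-! Let `s` be a maximum agreement set of `S₁^{xᵢ}` and `S₂^{y₁}`. If `s` lies below `x_{i+1}`
or below `y_j`, it is an agreement set of one of the first two pairs. Otherwise, since no label
below `Xᵢ` occurs below `Y₁, …, Y_{j-1}`, every label of `s` outside `x_{i+1}` lies below `y_j`,
and `s` first leaves the path `Q` at some level `b < j`. At the roots of `xᵢ` and `y_b` the
agreement isomorphism must then match the part of `s` under some `u ∈ Xᵢ` with the part under
`y_{b+1}`, and the part under `x_{i+1}` with the part under some `w ∈ Y_b`, which gives
`|s| ≤ rr(u, y_j) + rr(x_{i+1}, w)`. Conversely, maximum agreement sets of `(u, y_j)` and of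
`(x_{i+1}, v)` with `v ∈ Y_b` have disjoint labels, and their union is an agreement set of `xᵢ`
and `y_b`, hence of `xᵢ` and `y₁`. -/

theorem List.filterMap_perm_erase {α β : Type*} [DecidableEq α] (f : α → Option β) {l : List α}
    {c : α} (hc : c ∈ l) : (l.filterMap f).Perm ((f c).toList ++ (l.erase c).filterMap f) := by
  have h := (List.perm_cons_erase hc).filterMap f
  rw [List.filterMap_cons] at h
  cases hfc : f c <;> simpa [hfc] using h

theorem List.filterMap_perm_cons_cons {α β : Type*} [DecidableEq α] {f : α → Option β}
    {l : List α} {c d : α} {u v : β} (hc : c ∈ l) (hd : d ∈ l) (hcd : c ≠ d)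
    (hfc : f c = some u) (hfd : f d = some v) :
    (l.filterMap f).Perm (u :: v :: ((l.erase c).erase d).filterMap f) := by
  have h := List.filterMap_perm_erase f ((List.mem_erase_of_ne hcd.symm).2 hd)
  rw [hfd] at h
  have h' := List.filterMap_perm_erase f hc
  rw [hfc] at h'
  exact h'.trans (h.cons u)

theorem Finset.sum_le_of_card_le_one {ι : Type*} {M : Finset ι} (hM : M.card ≤ 1) {f : ι → ℕ}
    {n : ℕ} (h : ∀ p ∈ M, f p ≤ n) : ∑ p ∈ M, f p ≤ n :=
  (Finset.sum_le_card_nsmul M f n h).trans (by simpa using Nat.mul_le_mul_right n hM)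

namespace ETree

section

variable {L : Type}

@[induction_eliminator]
theorem induction {motive : ETree L → Prop} (leaf : ∀ a, motive (leaf a))
    (node : ∀ ts, (∀ t ∈ ts, motive t) → motive (node ts)) : ∀ t, motive t
  | .leaf a => leaf a
  | .node ts => node ts fun t _ => induction leaf node t

theorem labelList_node (ts : List (ETree L)) : labelList (node ts) = ts.flatMap labelList := by
  simp only [labelList, List.flatMap_subtype, List.unattach_attach]

theorem IsSubtree.trans {s t u : ETree L} (h₁ : IsSubtree s t) (h₂ : IsSubtree t u) :
    IsSubtree s u := by
  induction h₂ with
  | refl => exact h₁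
  | child hc _ ih => exact .child hc ih

theorem IsSubtree.of_mem_children {c t : ETree L} (hc : c ∈ t.children) : IsSubtree c t := by
  cases t with
  | leaf => simp [children] at hc
  | node ts => exact .child hc (.refl c)

theorem IsEvolutionary.of_mem {ts : List (ETree L)} {c : ETree L}
    (ht : IsEvolutionary (node ts)) (hc : c ∈ ts) : IsEvolutionary c := by
  obtain ⟨hh, hnd⟩ := ht
  cases hh with
  | node _ _ hch =>
    rw [labelList_node, List.nodup_flatMap] at hnd
    exact ⟨hch c hc, hnd.1 c hc⟩

theorem IsEvolutionary.of_isSubtree {t u : ETree L} (ht : IsEvolutionary t)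
    (h : IsSubtree u t) : IsEvolutionary u := by
  induction h with
  | refl => exact ht
  | child hc _ ih => exact ih (ht.of_mem hc)

theorem IsEvolutionary.pairwise_disjoint {ts : List (ETree L)} (ht : IsEvolutionary (node ts)) :
    ts.Pairwise fun c d => (labelList c).Disjoint (labelList d) := by
  have hnd := ht.2
  rw [labelList_node, List.nodup_flatMap] at hnd
  exact hnd.2

def nodeOf : List (ETree L) → Option (ETree L)
  | [] => none
  | [u] => some u
  | us => some (node us)

theorem nodeOf_eq_none_iff {l : List (ETree L)} : nodeOf l = none ↔ l = [] := by
  rcases l with _ | ⟨u, _ | _⟩ <;> simp [nodeOf]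

theorem nodeOf_of_two_le_length {l : List (ETree L)} (h : 2 ≤ l.length) :
    nodeOf l = some (node l) := by
  match l with
  | [] | [_] => simp at h
  | _ :: _ :: _ => rfl

theorem Iso.exists_mem_of_node {ts us : List (ETree L)} (h : Iso (ETree.node ts) (ETree.node us))
    {c : ETree L} (hc : c ∈ ts) : ∃ d ∈ us, Iso c d := by
  cases h with
  | node _ _ e h =>
    obtain ⟨k, rfl⟩ := List.mem_iff_get.1 hc
    exact ⟨us.get (e k), List.get_mem _ _, h k⟩

theorem iso_node_of_perm_pair {l l' : List (ETree L)} {a b c d : ETree L}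
    (hl : l.Perm [a, b]) (hl' : l'.Perm [c, d]) (hac : Iso a c) (hbd : Iso b d) :
    Iso (node l) (node l') := by
  obtain rfl | rfl := List.perm_pair.1 hl <;> obtain rfl | rfl := List.perm_pair.1 hl'
  · exact .node _ _ (Equiv.refl _) fun k => by fin_cases k; exacts [hac, hbd]
  · exact .node _ _ (Equiv.swap 0 1) fun k => by fin_cases k; exacts [hac, hbd]
  · exact .node _ _ (Equiv.swap 0 1) fun k => by fin_cases k; exacts [hbd, hac]
  · exact .node _ _ (Equiv.refl _) fun k => by fin_cases k; exacts [hbd, hac]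

end

variable {L : Type} [DecidableEq L]

theorem mem_labelSet_node {a : L} {ts : List (ETree L)} :
    a ∈ labelSet (node ts) ↔ ∃ t ∈ ts, a ∈ labelSet t := by
  simp [labelSet, labelList_node]

theorem mem_labelSet_of_nodeOf_eq_some {l : List (ETree L)} {u : ETree L}
    (h : nodeOf l = some u) {a : L} : a ∈ labelSet u ↔ ∃ c ∈ l, a ∈ labelSet c := by
  rcases l with _ | ⟨c, _ | _⟩ <;> simp only [nodeOf, Option.some.injEq, reduceCtorEq] at h <;>
    subst h <;> simp [mem_labelSet_node]

theorem labelSet_nonempty {t : ETree L} (ht : Homeo t) : (labelSet t).Nonempty := by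
  induction t with
  | leaf a => exact ⟨a, by simp [labelSet, labelList]⟩
  | node ts ih =>
    cases ht with
    | node _ hlen hch =>
      obtain ⟨c, hc⟩ := List.exists_mem_of_length_pos (by omega : 0 < ts.length)
      obtain ⟨a, ha⟩ := ih c hc (hch c hc)
      exact ⟨a, mem_labelSet_node.2 ⟨c, hc, ha⟩⟩

theorem IsSubtree.labelSet_subset {u t : ETree L} (h : IsSubtree u t) :
    labelSet u ⊆ labelSet t := by
  induction h with
  | refl => exact Finset.Subset.refl _
  | child hc _ ih => exact fun a ha => mem_labelSet_node.2 ⟨_, hc, ih ha⟩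

theorem IsEvolutionary.nodup_children {t : ETree L} (ht : IsEvolutionary t) :
    t.children.Nodup := by
  cases t with
  | leaf => exact List.nodup_nil
  | node ts =>
    refine ht.pairwise_disjoint.imp_of_mem fun hc _ hdisj heq => ?_
    subst heq
    obtain ⟨a, ha⟩ := labelSet_nonempty (ht.of_mem hc).1
    exact hdisj (List.mem_toFinset.1 ha) (List.mem_toFinset.1 ha)

theorem IsEvolutionary.disjoint_labelSet {t c d : ETree L} (ht : IsEvolutionary t)
    (hc : c ∈ t.children) (hd : d ∈ t.children) (hcd : c ≠ d) :
    Disjoint (labelSet c) (labelSet d) := by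
  cases t with
  | leaf => simp [children] at hc
  | node ts =>
    have : Std.Symm fun c d : ETree L => (labelList c).Disjoint (labelList d) :=
      ⟨fun _ _ h => h.symm⟩
    have h := ht.pairwise_disjoint.forall hc hd hcd
    exact Finset.disjoint_left.2 fun a ha hb => h (List.mem_toFinset.1 ha) (List.mem_toFinset.1 hb)

theorem restrict_node (ts : List (ETree L)) (s : Finset L) :
    restrict (node ts) s = nodeOf (ts.filterMap (restrict · s)) := by
  rw [restrict]
  simp only [List.filterMap_subtype, List.unattach_attach]
  generalize ts.filterMap (restrict · s) = l
  rcases l with _ | ⟨u, _ | _⟩ <;> rfl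

theorem restrict_eq_none_iff {t : ETree L} {s : Finset L} :
    restrict t s = none ↔ Disjoint (labelSet t) s := by
  induction t with
  | leaf a => by_cases h : a ∈ s <;> simp [restrict, labelSet, labelList, h]
  | node ts ih =>
    rw [restrict_node, nodeOf_eq_none_iff, List.filterMap_eq_nil_iff]
    constructor
    · refine fun h => Finset.disjoint_left.2 fun a ha has => ?_
      obtain ⟨c, hc, hac⟩ := mem_labelSet_node.1 ha
      exact Finset.disjoint_left.1 ((ih c hc).1 (h c hc)) hac has
    · exact fun h c hc => (ih c hc).2 (h.mono_left fun a ha => mem_labelSet_node.2 ⟨c, hc, ha⟩)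

theorem exists_restrict_eq_some {t : ETree L} {s : Finset L}
    (h : (labelSet t ∩ s).Nonempty) : ∃ T, restrict t s = some T :=
  Option.ne_none_iff_exists'.1 fun hn =>
    Finset.not_disjoint_iff_nonempty_inter.2 h (restrict_eq_none_iff.1 hn)

theorem labelSet_restrict {t u : ETree L} {s : Finset L} (h : restrict t s = some u) :
    labelSet u = labelSet t ∩ s := by
  induction t generalizing u with
  | leaf a =>
    by_cases has : a ∈ s
    · simp only [restrict, if_pos has, Option.some.injEq] at h
      subst h
      simp [labelSet, labelList, has]
    · simp [restrict, has] at h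
  | node ts ih =>
    rw [restrict_node] at h
    ext a
    simp only [mem_labelSet_of_nodeOf_eq_some h, List.mem_filterMap, Finset.mem_inter,
      mem_labelSet_node]
    constructor
    · rintro ⟨_, ⟨c, hc, hcs⟩, ha⟩
      rw [ih c hc hcs, Finset.mem_inter] at ha
      exact ⟨⟨c, hc, ha.1⟩, ha.2⟩
    · rintro ⟨⟨c, hc, hac⟩, has⟩
      obtain ⟨T, hT⟩ := exists_restrict_eq_some ⟨a, Finset.mem_inter.2 ⟨hac, has⟩⟩
      exact ⟨T, ⟨c, hc, hT⟩, by rw [ih c hc hT]; exact Finset.mem_inter.2 ⟨hac, has⟩⟩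

theorem restrict_congr {t : ETree L} {s s' : Finset L}
    (h : ∀ a ∈ labelSet t, a ∈ s ↔ a ∈ s') : restrict t s = restrict t s' := by
  induction t with
  | leaf a => simp [restrict, h a (by simp [labelSet, labelList])]
  | node ts ih =>
    rw [restrict_node, restrict_node]
    congr 1
    exact List.filterMap_congr fun c hc =>
      ih c hc fun a ha => h a (mem_labelSet_node.2 ⟨c, hc, ha⟩)

theorem restrict_eq_of_forall_ne {t c : ETree L} {s : Finset L} (ht : t.children.Nodup)
    (hc : c ∈ t.children) (h : ∀ d ∈ t.children, d ≠ c → restrict d s = none) :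
    restrict t s = restrict c s := by
  cases t with
  | leaf => simp [children] at hc
  | node ts =>
    dsimp only [children] at *
    have hrest : (ts.erase c).filterMap (restrict · s) = [] :=
      List.filterMap_eq_nil_iff.2 fun d hd =>
        h d (List.mem_of_mem_erase hd) (ht.mem_erase_iff.1 hd).1
    have hperm := List.filterMap_perm_erase (restrict · s) hc
    rw [hrest, List.append_nil] at hperm
    rw [restrict_node]
    cases hcs : restrict c s with
    | none => rw [hcs] at hperm; rw [List.perm_nil.1 hperm]; rfl
    | some T => rw [hcs] at hperm; rw [List.perm_singleton.1 hperm]; rfl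

theorem restrict_eq_of_isSubtree {u t : ETree L} {s : Finset L} (h : IsSubtree u t)
    (ht : IsEvolutionary t) (hs : ∀ a ∈ s, a ∈ labelSet t → a ∈ labelSet u) :
    restrict t s = restrict u s := by
  induction h with
  | refl => rfl
  | @child c ts hc hsub ih =>
    refine (restrict_eq_of_forall_ne ht.nodup_children hc fun d hd hdc => ?_).trans
      (ih (ht.of_mem hc) fun a ha hac => hs a ha (mem_labelSet_node.2 ⟨c, hc, hac⟩))
    refine restrict_eq_none_iff.2 (Finset.disjoint_left.2 fun a had has => ?_)
    have hau := hs a has (mem_labelSet_node.2 ⟨d, hd, had⟩)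
    exact Finset.disjoint_left.1 (ht.disjoint_labelSet hd hc hdc) had (hsub.labelSet_subset hau)

theorem restrict_eq_some_node {t c d : ETree L} {s : Finset L} (hc : c ∈ t.children)
    (hd : d ∈ t.children) (hcd : c ≠ d) (hcs : (labelSet c ∩ s).Nonempty)
    (hds : (labelSet d ∩ s).Nonempty) :
    restrict t s = some (node (t.children.filterMap (restrict · s))) := by
  cases t with
  | leaf => simp [children] at hc
  | node ts =>
    dsimp only [children] at *
    obtain ⟨T₁, hT₁⟩ := exists_restrict_eq_some hcs
    obtain ⟨T₂, hT₂⟩ := exists_restrict_eq_some hds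
    rw [restrict_node]
    refine nodeOf_of_two_le_length ?_
    rw [(List.filterMap_perm_cons_cons (f := (restrict · s)) hc hd hcd hT₁ hT₂).length_eq]
    simp

theorem restrict_union_eq {t c d T₁ T₂ : ETree L} {s₁ s₂ : Finset L} (ht : IsEvolutionary t)
    (hc : c ∈ t.children) (hd : d ∈ t.children) (hcd : c ≠ d)
    (hs₁ : s₁ ⊆ labelSet c) (hs₂ : s₂ ⊆ labelSet d)
    (h₁ : restrict c s₁ = some T₁) (h₂ : restrict d s₂ = some T₂) :
    ∃ l : List (ETree L), l.Perm [T₁, T₂] ∧ restrict t (s₁ ∪ s₂) = some (node l) := by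
  have hdisj := ht.disjoint_labelSet hc hd hcd
  have hc' : restrict c (s₁ ∪ s₂) = some T₁ := h₁ ▸ restrict_congr fun a ha =>
    ⟨fun has => (Finset.mem_union.1 has).resolve_right fun h =>
      Finset.disjoint_left.1 hdisj ha (hs₂ h), Finset.mem_union_left _⟩
  have hd' : restrict d (s₁ ∪ s₂) = some T₂ := h₂ ▸ restrict_congr fun a ha =>
    ⟨fun has => (Finset.mem_union.1 has).resolve_left fun h =>
      Finset.disjoint_left.1 hdisj (hs₁ h) ha, Finset.mem_union_right _⟩
  have hnd := ht.nodup_children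
  have hrest : ((t.children.erase c).erase d).filterMap (restrict · (s₁ ∪ s₂)) = [] :=
    List.filterMap_eq_nil_iff.2 fun e he => by
      obtain ⟨hed, he⟩ := (hnd.erase c).mem_erase_iff.1 he
      obtain ⟨hec, he⟩ := hnd.mem_erase_iff.1 he
      exact restrict_eq_none_iff.2 (Finset.disjoint_union_right.2
        ⟨(ht.disjoint_labelSet he hc hec).mono_right hs₁,
          (ht.disjoint_labelSet he hd hed).mono_right hs₂⟩)
  have hperm := List.filterMap_perm_cons_cons (f := (restrict · (s₁ ∪ s₂))) hc hd hcd hc' hd'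
  rw [hrest] at hperm
  cases t with
  | leaf => simp [children] at hc
  | node ts =>
    dsimp only [children] at hperm
    refine ⟨_, hperm, ?_⟩
    rw [restrict_node, nodeOf_of_two_le_length (by rw [hperm.length_eq]; rfl)]

theorem Iso.labelSet_eq {t u : ETree L} (h : Iso t u) : labelSet t = labelSet u := by
  induction h with
  | leaf => rfl
  | node ts us e _ ih =>
    ext a
    simp only [mem_labelSet_node, List.mem_iff_get]
    constructor
    · rintro ⟨_, ⟨k, rfl⟩, ha⟩
      exact ⟨_, ⟨e k, rfl⟩, ih k ▸ ha⟩
    · rintro ⟨_, ⟨k, rfl⟩, ha⟩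
      exact ⟨_, ⟨e.symm k, rfl⟩, by rwa [ih, e.apply_symm_apply]⟩

theorem IsoO.labelSet_inter_eq {t u : ETree L} {s : Finset L}
    (h : IsoO (restrict t s) (restrict u s)) : labelSet t ∩ s = labelSet u ∩ s := by
  cases ht : restrict t s <;> cases hu : restrict u s <;> rw [ht, hu] at h
  · rw [(Finset.disjoint_iff_inter_eq_empty).1 (restrict_eq_none_iff.1 ht),
      (Finset.disjoint_iff_inter_eq_empty).1 (restrict_eq_none_iff.1 hu)]
  · exact h.elim
  · exact h.elim
  · rw [← labelSet_restrict ht, ← labelSet_restrict hu]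
    exact Iso.labelSet_eq h

theorem exists_isoO_restrict_of_mem {ts us : List (ETree L)} {s : Finset L}
    (h : Iso (node (ts.filterMap (restrict · s))) (node (us.filterMap (restrict · s))))
    {c : ETree L} (hc : c ∈ ts) (hcs : (labelSet c ∩ s).Nonempty) :
    ∃ d ∈ us, IsoO (restrict c s) (restrict d s) := by
  obtain ⟨T, hT⟩ := exists_restrict_eq_some hcs
  obtain ⟨D, hD, hTD⟩ :=
    h.exists_mem_of_node (List.mem_filterMap (f := (restrict · s)).2 ⟨c, hc, hT⟩)
  obtain ⟨d, hd, hdD⟩ := List.mem_filterMap.1 hD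
  exact ⟨d, hd, by rw [hT, hdD]; exact hTD⟩

theorem rr_bddAbove (t u : ETree L) :
    BddAbove {k | ∃ s : Finset L, s ⊆ labelSet t ∩ labelSet u ∧ s.card = k ∧
      IsoO (restrict t s) (restrict u s)} :=
  ⟨(labelSet t).card, by
    rintro _ ⟨s, hs, rfl, -⟩
    exact Finset.card_le_card (hs.trans Finset.inter_subset_left)⟩

theorem card_le_rr {t u : ETree L} {s : Finset L} (hs : s ⊆ labelSet t ∩ labelSet u)
    (h : IsoO (restrict t s) (restrict u s)) : s.card ≤ rr t u :=
  le_csSup (rr_bddAbove t u) ⟨s, hs, rfl, h⟩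

theorem exists_card_eq_rr (t u : ETree L) : ∃ s : Finset L, s ⊆ labelSet t ∩ labelSet u ∧
    s.card = rr t u ∧ IsoO (restrict t s) (restrict u s) := by
  have hempty : IsoO (restrict t ∅) (restrict u ∅) := by
    rw [restrict_eq_none_iff.2 (Finset.disjoint_empty_right _),
      restrict_eq_none_iff.2 (Finset.disjoint_empty_right _)]
    trivial
  exact Nat.sSup_mem (by exact ⟨0, ∅, Finset.empty_subset _, rfl, hempty⟩) (rr_bddAbove t u)

theorem card_inter_le_rr {t u : ETree L} {s : Finset L}
    (h : IsoO (restrict t s) (restrict u s)) : (labelSet t ∩ s).card ≤ rr t u := by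
  have hts := h.labelSet_inter_eq
  refine card_le_rr (Finset.subset_inter Finset.inter_subset_left
    (hts ▸ Finset.inter_subset_left)) ?_
  rwa [restrict_congr (t := t) (s' := s) fun a ha => by simp [ha],
    restrict_congr (t := u) (s' := s) fun a ha => by rw [hts]; simp [ha]]

theorem rr_le_rr_of_isSubtree {t t' u u' : ETree L} (ht : IsEvolutionary t)
    (hu : IsEvolutionary u) (htt' : IsSubtree t' t) (huu' : IsSubtree u' u) :
    rr t' u' ≤ rr t u := by
  obtain ⟨s, hs, hcard, h⟩ := exists_card_eq_rr t' u'
  obtain ⟨hst, hsu⟩ := Finset.subset_inter_iff.1 hs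
  rw [← hcard]
  refine card_le_rr (Finset.subset_inter (hst.trans htt'.labelSet_subset)
    (hsu.trans huu'.labelSet_subset)) ?_
  rwa [restrict_eq_of_isSubtree htt' ht fun a ha _ => hst ha,
    restrict_eq_of_isSubtree huu' hu fun a ha _ => hsu ha]

theorem rr_add_rr_le_rr {t t' c d c' d' : ETree L} (ht : IsEvolutionary t)
    (ht' : IsEvolutionary t') (hc : c ∈ t.children) (hd : d ∈ t.children) (hcd : c ≠ d)
    (hc' : c' ∈ t'.children) (hd' : d' ∈ t'.children) (hcd' : c' ≠ d') :
    rr c c' + rr d d' ≤ rr t t' := by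
  obtain ⟨s₁, hs₁, hcard₁, hiso₁⟩ := exists_card_eq_rr c c'
  obtain ⟨s₂, hs₂, hcard₂, hiso₂⟩ := exists_card_eq_rr d d'
  rcases s₁.eq_empty_or_nonempty with rfl | ⟨a₁, ha₁⟩
  · rw [← hcard₁, Finset.card_empty, zero_add]
    exact rr_le_rr_of_isSubtree ht ht' (.of_mem_children hd) (.of_mem_children hd')
  rcases s₂.eq_empty_or_nonempty with rfl | ⟨a₂, ha₂⟩
  · rw [← hcard₂, Finset.card_empty, add_zero]
    exact rr_le_rr_of_isSubtree ht ht' (.of_mem_children hc) (.of_mem_children hc')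
  obtain ⟨hs₁c, hs₁c'⟩ := Finset.subset_inter_iff.1 hs₁
  obtain ⟨hs₂d, hs₂d'⟩ := Finset.subset_inter_iff.1 hs₂
  obtain ⟨T₁, hT₁⟩ := exists_restrict_eq_some ⟨a₁, Finset.mem_inter.2 ⟨hs₁c ha₁, ha₁⟩⟩
  obtain ⟨T₁', hT₁'⟩ := exists_restrict_eq_some ⟨a₁, Finset.mem_inter.2 ⟨hs₁c' ha₁, ha₁⟩⟩
  obtain ⟨T₂, hT₂⟩ := exists_restrict_eq_some ⟨a₂, Finset.mem_inter.2 ⟨hs₂d ha₂, ha₂⟩⟩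
  obtain ⟨T₂', hT₂'⟩ := exists_restrict_eq_some ⟨a₂, Finset.mem_inter.2 ⟨hs₂d' ha₂, ha₂⟩⟩
  rw [hT₁, hT₁'] at hiso₁
  rw [hT₂, hT₂'] at hiso₂
  obtain ⟨l, hl, hrl⟩ := restrict_union_eq ht hc hd hcd hs₁c hs₂d hT₁ hT₂
  obtain ⟨l', hl', hrl'⟩ := restrict_union_eq ht' hc' hd' hcd' hs₁c' hs₂d' hT₁' hT₂'
  have hdisj : Disjoint s₁ s₂ := (ht.disjoint_labelSet hc hd hcd).mono hs₁c hs₂d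
  rw [← hcard₁, ← hcard₂, ← Finset.card_union_of_disjoint hdisj]
  refine card_le_rr (Finset.union_subset (hs₁.trans ?_) (hs₂.trans ?_)) ?_
  · exact Finset.inter_subset_inter (IsSubtree.of_mem_children hc).labelSet_subset
      (IsSubtree.of_mem_children hc').labelSet_subset
  · exact Finset.inter_subset_inter (IsSubtree.of_mem_children hd).labelSet_subset
      (IsSubtree.of_mem_children hd').labelSet_subset
  · rw [hrl, hrl']
    exact iso_node_of_perm_pair hl hl' hiso₁ hiso₂

theorem mm_bddAbove (U V : Finset (ETree L)) :
    BddAbove {w | ∃ M : Finset (ETree L × ETree L),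
      (∀ p ∈ M, p.1 ∈ U ∧ p.2 ∈ V) ∧
      (∀ p ∈ M, ∀ q ∈ M, p ≠ q → p.1 ≠ q.1 ∧ p.2 ≠ q.2) ∧
      w = ∑ p ∈ M, rr p.1 p.2} :=
  ⟨∑ p ∈ U ×ˢ V, rr p.1 p.2, by
    rintro _ ⟨M, hM, -, rfl⟩
    exact Finset.sum_le_sum_of_subset fun p hp => Finset.mem_product.2 (hM p hp)⟩

theorem mm_singleton_right (U : Finset (ETree L)) (y : ETree L) :
    mm U {y} = U.sup fun u => rr u y := by
  refine le_antisymm (csSup_le ⟨0, ∅, by simp, by simp, by simp⟩ ?_)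
    (Finset.sup_le fun u hu =>
      le_csSup (mm_bddAbove U {y}) ⟨{(u, y)}, by simp [hu], by simp, by simp⟩)
  rintro _ ⟨M, hM, hinj, rfl⟩
  have hsnd : ∀ p ∈ M, p.2 = y := fun p hp => Finset.mem_singleton.1 (hM p hp).2
  have hcard : M.card ≤ 1 := Finset.card_le_one.2 fun p hp q hq =>
    by_contra fun hpq => (hinj p hp q hq hpq).2 (by rw [hsnd p hp, hsnd q hq])
  exact Finset.sum_le_of_card_le_one hcard fun p hp => by
    rw [hsnd p hp]; exact Finset.le_sup (f := fun u => rr u y) (hM p hp).1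

theorem mm_singleton_left (x : ETree L) (V : Finset (ETree L)) :
    mm {x} V = V.sup fun v => rr x v := by
  refine le_antisymm (csSup_le ⟨0, ∅, by simp, by simp, by simp⟩ ?_)
    (Finset.sup_le fun v hv =>
      le_csSup (mm_bddAbove {x} V) ⟨{(x, v)}, by simp [hv], by simp, by simp⟩)
  rintro _ ⟨M, hM, hinj, rfl⟩
  have hfst : ∀ p ∈ M, p.1 = x := fun p hp => Finset.mem_singleton.1 (hM p hp).1
  have hcard : M.card ≤ 1 := Finset.card_le_one.2 fun p hp q hq =>
    by_contra fun hpq => (hinj p hp q hq hpq).1 (by rw [hfst p hp, hfst q hq])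
  exact Finset.sum_le_of_card_le_one hcard fun p hp => by
    rw [hfst p hp]; exact Finset.le_sup (f := fun v => rr x v) (hM p hp).2

theorem rr_le_mm_singleton_right {U : Finset (ETree L)} {u y : ETree L} (hu : u ∈ U) :
    rr u y ≤ mm U {y} :=
  mm_singleton_right U y ▸ Finset.le_sup (f := fun u => rr u y) hu

theorem rr_le_mm_singleton_left {V : Finset (ETree L)} {x v : ETree L} (hv : v ∈ V) :
    rr x v ≤ mm {x} V :=
  mm_singleton_left x V ▸ Finset.le_sup (f := fun v => rr x v) hv

end ETree

namespace RootPath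

open ETree

variable {L : Type} (P : RootPath L)

theorem vert_isSubtree {c c' : ℕ} (h₁ : 1 ≤ c) (h₂ : c ≤ c') (h₃ : c' ≤ P.len) :
    IsSubtree (P.vert c') (P.vert c) := by
  induction c', h₂ using Nat.le_induction with
  | base => exact .refl _
  | succ n hn ih =>
    exact (IsSubtree.of_mem_children (P.step n (h₁.trans hn) h₃)).trans (ih (by omega))

theorem isEvolutionary_vert (hP : IsEvolutionary P.tree) {c : ℕ} (h₁ : 1 ≤ c) (h₂ : c ≤ P.len) :
    IsEvolutionary (P.vert c) :=
  hP.of_isSubtree (P.first ▸ P.vert_isSubtree le_rfl h₁ h₂)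

theorem mem_offPath_iff {c : ℕ} (hc : c < P.len) {u : ETree L} :
    u ∈ P.offPath c ↔ u ∈ (P.vert c).children ∧ u ≠ P.vert (c + 1) := by
  rw [offPath, if_pos hc, Finset.mem_erase, List.mem_toFinset, and_comm]

variable [DecidableEq L]

theorem offPath_nonempty (hP : IsEvolutionary P.tree) {c : ℕ} (h₁ : 1 ≤ c) (h₂ : c < P.len) :
    (P.offPath c).Nonempty := by
  have hev := P.isEvolutionary_vert hP h₁ h₂.le
  have hlen : 2 ≤ (P.vert c).children.length := by
    obtain ⟨ts, hts⟩ := P.no_leaf c h₁ h₂.le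
    rw [hts] at hev ⊢
    cases hev.1 with
    | node _ hlen _ => exact hlen
  rw [offPath, if_pos h₂, ← Finset.card_pos,
    Finset.card_erase_of_mem (List.mem_toFinset.2 (P.step c h₁ h₂)),
    List.toFinset_card_of_nodup hev.nodup_children]
  omega

theorem disjoint_labelSet_offPath (hP : IsEvolutionary P.tree) {c : ℕ} (h₁ : 1 ≤ c)
    (h₂ : c < P.len) {u : ETree L} (hu : u ∈ P.offPath c) :
    Disjoint (labelSet u) (labelSet (P.vert (c + 1))) :=
  (P.isEvolutionary_vert hP h₁ h₂.le).disjoint_labelSet ((P.mem_offPath_iff h₂).1 hu).1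
    (P.step c h₁ h₂) ((P.mem_offPath_iff h₂).1 hu).2

theorem mem_labelSet_vert_succ_or_offPath {c : ℕ} (h₁ : 1 ≤ c) (h₂ : c < P.len) {a : L}
    (ha : a ∈ labelSet (P.vert c)) :
    a ∈ labelSet (P.vert (c + 1)) ∨ ∃ u ∈ P.offPath c, a ∈ labelSet u := by
  obtain ⟨ts, hts⟩ := P.no_leaf c h₁ h₂.le
  rw [hts, mem_labelSet_node] at ha
  obtain ⟨u, hu, hau⟩ := ha
  by_cases hu' : u = P.vert (c + 1)
  · exact .inl (hu' ▸ hau)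
  · exact .inr ⟨u, (P.mem_offPath_iff h₂).2 ⟨by rwa [hts], hu'⟩, hau⟩

theorem exists_offPath_inter_nonempty {s : Finset L} {c : ℕ} (hc₁ : 1 ≤ c) (hc : c ≤ P.len)
    (h₁ : s ⊆ labelSet (P.vert 1)) (hc' : ¬ s ⊆ labelSet (P.vert c)) :
    ∃ b, 1 ≤ b ∧ b < c ∧ s ⊆ labelSet (P.vert b) ∧
      ∃ v ∈ P.offPath b, (labelSet v ∩ s).Nonempty := by
  induction c, hc₁ using Nat.le_induction with
  | base => exact absurd h₁ hc'
  | succ n hn ih =>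
    by_cases hsn : s ⊆ labelSet (P.vert n)
    · obtain ⟨a, ha, han⟩ := Finset.not_subset.1 hc'
      obtain ⟨v, hv, hav⟩ :=
        (P.mem_labelSet_vert_succ_or_offPath hn (by omega) (hsn ha)).resolve_left han
      exact ⟨n, hn, by omega, hsn, v, hv, a, Finset.mem_inter.2 ⟨hav, ha⟩⟩
    · obtain ⟨b, hb₁, hbn, hsb⟩ := ih (by omega) hsn
      exact ⟨b, hb₁, by omega, hsb⟩

end RootPath

section Recurrence

open ETree

variable {L : Type} [DecidableEq L] {P Q : RootPath L}

theorem intersecting_of_mem {i b : ℕ} {u v : ETree L} (hu : u ∈ P.offPath i)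
    (hv : v ∈ Q.offPath b) {a : L} (hau : a ∈ labelSet u) (hav : a ∈ labelSet v) :
    Intersecting P Q i b :=
  ⟨u, hu, v, hv, a, Finset.mem_inter.2 ⟨hau, hav⟩⟩

theorem mem_labelSet_vert_of_not_intersecting {i j : ℕ} (hj₁ : 1 ≤ j) (hj : j ≤ Q.len)
    (hnon : ∀ b, 1 ≤ b → b < j → ¬ Intersecting P Q i b) {u : ETree L} (hu : u ∈ P.offPath i)
    {a : L} (hau : a ∈ labelSet u) (ha : a ∈ labelSet (Q.vert 1)) : a ∈ labelSet (Q.vert j) := by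
  by_contra haj
  obtain ⟨b, hb₁, hbj, -, v, hv, e, he⟩ := Q.exists_offPath_inter_nonempty hj₁ hj
    (Finset.singleton_subset_iff.2 ha) (by simpa using haj)
  rw [Finset.mem_inter, Finset.mem_singleton] at he
  exact hnon b hb₁ hbj (intersecting_of_mem hu hv hau (he.2 ▸ he.1))

theorem isoO_restrict_match_of_not_intersecting (hS₁ : IsEvolutionary P.tree) {i b : ℕ}
    (hi₁ : 1 ≤ i) (hi : i < P.len) (hb₁ : 1 ≤ b) (hb : b < Q.len) (hnon : ¬ Intersecting P Q i b)
    {s : Finset L} (hiso : IsoO (restrict (P.vert i) s) (restrict (Q.vert b) s))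
    {u : ETree L} (hu : u ∈ P.offPath i) {a : L} (ha : a ∈ s) (hau : a ∈ labelSet u)
    (hay : a ∈ labelSet (Q.vert (b + 1))) (hxs : (labelSet (P.vert (i + 1)) ∩ s).Nonempty)
    {v : ETree L} (hv : v ∈ Q.offPath b) (hvs : (labelSet v ∩ s).Nonempty) :
    IsoO (restrict u s) (restrict (Q.vert (b + 1)) s) ∧
      ∃ w ∈ Q.offPath b, IsoO (restrict (P.vert (i + 1)) s) (restrict w s) := by
  have hus : (labelSet u ∩ s).Nonempty := ⟨a, Finset.mem_inter.2 ⟨hau, ha⟩⟩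
  obtain ⟨hu_ch, hu_ne⟩ := (P.mem_offPath_iff hi).1 hu
  obtain ⟨hv_ch, hv_ne⟩ := (Q.mem_offPath_iff hb).1 hv
  rw [restrict_eq_some_node hu_ch (P.step i hi₁ hi) hu_ne hus hxs,
    restrict_eq_some_node hv_ch (Q.step b hb₁ hb) hv_ne hvs
      ⟨a, Finset.mem_inter.2 ⟨hay, ha⟩⟩] at hiso
  refine ⟨?_, ?_⟩
  · obtain ⟨d, hd, hud⟩ := exists_isoO_restrict_of_mem hiso hu_ch hus
    -- `d` carries the label `a` of `u ∈ Xᵢ`, so nonintersection keeps it out of `Y_b`.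
    obtain rfl : d = Q.vert (b + 1) := by
      by_contra hne
      have had : a ∈ labelSet d ∩ s := hud.labelSet_inter_eq ▸ Finset.mem_inter.2 ⟨hau, ha⟩
      exact hnon (intersecting_of_mem hu ((Q.mem_offPath_iff hb).2 ⟨hd, hne⟩) hau
        (Finset.mem_inter.1 had).1)
    exact hud
  · obtain ⟨w, hw, hxw⟩ := exists_isoO_restrict_of_mem hiso (P.step i hi₁ hi) hxs
    refine ⟨w, (Q.mem_offPath_iff hb).2 ⟨hw, ?_⟩, hxw⟩
    rintro rfl
    have hax : a ∈ labelSet (P.vert (i + 1)) ∩ s :=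
      hxw.labelSet_inter_eq ▸ Finset.mem_inter.2 ⟨hay, ha⟩
    exact Finset.disjoint_left.1 (P.disjoint_labelSet_offPath hS₁ hi₁ hi hu) hau
      (Finset.mem_inter.1 hax).1

theorem card_le_rr_add_rr_of_isoO (hS₁ : IsEvolutionary P.tree) (hS₂ : IsEvolutionary Q.tree)
    {i b j : ℕ} (hi₁ : 1 ≤ i) (hi : i < P.len) (hb₁ : 1 ≤ b) (hbj : b < j) (hj : j ≤ Q.len)
    {s : Finset L} (hsj : ∀ a ∈ s, a ∉ labelSet (P.vert (i + 1)) → a ∈ labelSet (Q.vert j))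
    {u w : ETree L} (hu : u ∈ P.offPath i)
    (hu_iso : IsoO (restrict u s) (restrict (Q.vert (b + 1)) s))
    (hw : IsoO (restrict (P.vert (i + 1)) s) (restrict w s)) :
    s.card ≤ rr u (Q.vert j) + rr (P.vert (i + 1)) w := by
  have hyj := Q.vert_isSubtree (by omega) hbj hj
  have hdisj := P.disjoint_labelSet_offPath hS₁ hi₁ hi hu
  have hsdiff : s \ labelSet (P.vert (i + 1)) ⊆ labelSet u ∩ s := fun a ha => by
    obtain ⟨has, hax⟩ := Finset.mem_sdiff.1 ha
    exact hu_iso.labelSet_inter_eq ▸ Finset.mem_inter.2 ⟨hyj.labelSet_subset (hsj a has hax), has⟩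
  have hyu : ∀ a ∈ s, a ∈ labelSet (Q.vert (b + 1)) → a ∈ labelSet (Q.vert j) := fun a ha hay =>
    have hau : a ∈ labelSet u ∩ s := hu_iso.labelSet_inter_eq ▸ Finset.mem_inter.2 ⟨hay, ha⟩
    hsj a ha (Finset.disjoint_left.1 hdisj (Finset.mem_inter.1 hau).1)
  rw [restrict_eq_of_isSubtree hyj (Q.isEvolutionary_vert hS₂ (by omega) (by omega)) hyu] at hu_iso
  calc s.card = (s \ labelSet (P.vert (i + 1))).card + (labelSet (P.vert (i + 1)) ∩ s).card := by
        rw [add_comm, Finset.inter_comm, Finset.card_inter_add_card_sdiff]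
    _ ≤ rr u (Q.vert j) + rr (P.vert (i + 1)) w :=
        add_le_add ((Finset.card_le_card hsdiff).trans (card_inter_le_rr hu_iso))
          (card_inter_le_rr hw)

theorem rr_vert_le_max (hS₁ : IsEvolutionary P.tree) (hS₂ : IsEvolutionary Q.tree) {i j : ℕ}
    (hi₁ : 1 ≤ i) (hi : i < P.len) (hj₁ : 1 ≤ j) (hj : j ≤ Q.len)
    (hnon : ∀ b, 1 ≤ b → b < j → ¬ Intersecting P Q i b) :
    rr (P.vert i) (Q.vert 1) ≤ max (rr (P.vert i) (Q.vert j))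
      (max (rr (P.vert (i + 1)) (Q.vert 1)) (mm (P.offPath i) {Q.vert j} +
        (Finset.Icc 1 (j - 1)).sup fun b => mm {P.vert (i + 1)} (Q.offPath b))) := by
  have hx := P.isEvolutionary_vert hS₁ hi₁ hi.le
  have hy := Q.isEvolutionary_vert hS₂ le_rfl Q.len_pos
  obtain ⟨s, hs, hcard, hiso⟩ := exists_card_eq_rr (P.vert i) (Q.vert 1)
  obtain ⟨hsx, hsy⟩ := Finset.subset_inter_iff.1 hs
  rw [← hcard]
  by_cases hsx' : s ⊆ labelSet (P.vert (i + 1))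
  · rw [restrict_eq_of_isSubtree (.of_mem_children (P.step i hi₁ hi)) hx
      fun a ha _ => hsx' ha] at hiso
    exact le_max_of_le_right (le_max_of_le_left
      (Finset.inter_eq_right.2 hsx' ▸ card_inter_le_rr hiso))
  obtain ⟨a, has, hax⟩ := Finset.not_subset.1 hsx'
  obtain ⟨u, hu, hau⟩ := (P.mem_labelSet_vert_succ_or_offPath hi₁ hi (hsx has)).resolve_left hax
  have hsj : ∀ a ∈ s, a ∉ labelSet (P.vert (i + 1)) → a ∈ labelSet (Q.vert j) := fun a ha hax =>
    have ⟨u, hu, hau⟩ := (P.mem_labelSet_vert_succ_or_offPath hi₁ hi (hsx ha)).resolve_left hax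
    mem_labelSet_vert_of_not_intersecting hj₁ hj hnon hu hau (hsy ha)
  by_cases hsy' : s ⊆ labelSet (Q.vert j)
  · rw [restrict_eq_of_isSubtree (Q.vert_isSubtree le_rfl hj₁ hj) hy fun a ha _ => hsy' ha] at hiso
    exact le_max_of_le_left (Finset.inter_eq_right.2 hsx ▸ card_inter_le_rr hiso)
  obtain ⟨b, hb₁, hbj, hsb, v, hv, hvs⟩ := Q.exists_offPath_inter_nonempty hj₁ hj hsy hsy'
  obtain ⟨c, hcs, hcy⟩ := Finset.not_subset.1 hsy'
  have hcx : c ∈ labelSet (P.vert (i + 1)) := by_contra fun h => hcy (hsj c hcs h)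
  rw [restrict_eq_of_isSubtree (Q.vert_isSubtree le_rfl hb₁ (by omega)) hy
    fun a ha _ => hsb ha] at hiso
  obtain ⟨hu_iso, w, hw, hxw⟩ := isoO_restrict_match_of_not_intersecting hS₁ hi₁ hi hb₁ (by omega)
    (hnon b hb₁ hbj) hiso hu has hau
    ((Q.vert_isSubtree (by omega) hbj hj).labelSet_subset (hsj a has hax))
    ⟨c, Finset.mem_inter.2 ⟨hcx, hcs⟩⟩ hv hvs
  refine le_max_of_le_right (le_max_of_le_right
    ((card_le_rr_add_rr_of_isoO hS₁ hS₂ hi₁ hi hb₁ hbj hj hsj hu hu_iso hxw).trans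
      (add_le_add (rr_le_mm_singleton_right hu) ((rr_le_mm_singleton_left hw).trans ?_))))
  exact Finset.le_sup (f := fun b => mm {P.vert (i + 1)} (Q.offPath b))
    (Finset.mem_Icc.2 ⟨hb₁, by omega⟩)

theorem mm_add_sup_mm_le_rr (hS₁ : IsEvolutionary P.tree) (hS₂ : IsEvolutionary Q.tree)
    {i j : ℕ} (hi₁ : 1 ≤ i) (hi : i < P.len) (hj₁ : 1 < j) (hj : j ≤ Q.len) :
    mm (P.offPath i) {Q.vert j} + (Finset.Icc 1 (j - 1)).sup
      (fun b => mm {P.vert (i + 1)} (Q.offPath b)) ≤ rr (P.vert i) (Q.vert 1) := by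
  obtain ⟨u, hu, hmu⟩ := (P.offPath i).exists_mem_eq_sup (P.offPath_nonempty hS₁ hi₁ hi)
    fun u => rr u (Q.vert j)
  obtain ⟨b, hb, hmb⟩ := (Finset.Icc 1 (j - 1)).exists_mem_eq_sup
    ⟨1, Finset.mem_Icc.2 ⟨le_rfl, by omega⟩⟩ fun b => mm {P.vert (i + 1)} (Q.offPath b)
  obtain ⟨hb₁, hbj⟩ := Finset.mem_Icc.1 hb
  have hb : b < Q.len := by omega
  obtain ⟨v, hv, hmv⟩ := (Q.offPath b).exists_mem_eq_sup (Q.offPath_nonempty hS₂ hb₁ hb)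
    fun v => rr (P.vert (i + 1)) v
  obtain ⟨hu_ch, hu_ne⟩ := (P.mem_offPath_iff hi).1 hu
  obtain ⟨hv_ch, hv_ne⟩ := (Q.mem_offPath_iff hb).1 hv
  have hx := P.isEvolutionary_vert hS₁ hi₁ hi.le
  rw [mm_singleton_right, hmu, hmb, mm_singleton_left, hmv]
  calc rr u (Q.vert j) + rr (P.vert (i + 1)) v
      ≤ rr u (Q.vert (b + 1)) + rr (P.vert (i + 1)) v := by
        gcongr
        exact rr_le_rr_of_isSubtree (hx.of_isSubtree (.of_mem_children hu_ch))
          (Q.isEvolutionary_vert hS₂ (by omega) hb) (.refl _)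
          (Q.vert_isSubtree (by omega) (by omega) hj)
    _ ≤ rr (P.vert i) (Q.vert b) :=
        rr_add_rr_le_rr hx (Q.isEvolutionary_vert hS₂ hb₁ hb.le) hu_ch (P.step i hi₁ hi) hu_ne
          (Q.step b hb₁ hb) hv_ch hv_ne.symm
    _ ≤ rr (P.vert i) (Q.vert 1) :=
        rr_le_rr_of_isSubtree hx (Q.isEvolutionary_vert hS₂ le_rfl Q.len_pos) (.refl _)
          (Q.vert_isSubtree le_rfl hb₁ hb.le)

end Recurrence

open ETree in
theorem rr_recurrence_G_general {L : Type} [DecidableEq L] (P Q : RootPath L)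
    (hS₁ : ETree.IsEvolutionary P.tree) (hS₂ : ETree.IsEvolutionary Q.tree)
    (i j : ℕ) (hi₁ : 1 ≤ i) (hi : i < P.len) (hj₁ : 1 < j) (hj : j ≤ Q.len)
    (hnon : ∀ b, 1 ≤ b → b ≤ j - 1 → ¬ Intersecting P Q i b) :
    rr (P.vert i) (Q.vert 1) =
      max (rr (P.vert i) (Q.vert j))
      (max (rr (P.vert (i + 1)) (Q.vert 1))
           (mm (P.offPath i) {Q.vert j} +
            (Finset.Icc 1 (j - 1)).sup (fun b => mm {P.vert (i + 1)} (Q.offPath b)))) := by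
  have hx := P.isEvolutionary_vert hS₁ hi₁ hi.le
  have hy := Q.isEvolutionary_vert hS₂ le_rfl Q.len_pos
  refine le_antisymm
    (rr_vert_le_max hS₁ hS₂ hi₁ hi hj₁.le hj fun b hb₁ hbj => hnon b hb₁ (by omega))
    (max_le ?_ (max_le ?_ (mm_add_sup_mm_le_rr hS₁ hS₂ hi₁ hi hj₁ hj)))
  · exact rr_le_rr_of_isSubtree hx hy (.refl _) (Q.vert_isSubtree le_rfl hj₁.le hj)
  · exact rr_le_rr_of_isSubtree hx hy (.of_mem_children (P.step i hi₁ hi)) (.refl _)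

open ETree in
/-- In the root-path setting, let `i < p'` and `1 < j ≤ q'` be indices
such that the pair `(xᵢ, Q[1,j−1])` is nonintersecting.  Then
`rr(S₁^{xᵢ},S₂^{y₁}) = max { rr(S₁^{xᵢ},S₂^{y_j}), rr(S₁^{x_{i+1}},S₂^{y₁}),
mm(Xᵢ,y_j) + max_{j'∈[1,j−1]} mm(x_{i+1},Y_{j'}) }`. -/
theorem rr_recurrence_G {L : Type} [DecidableEq L] (P Q : RootPath L)
    (hS₁ : ETree.IsEvolutionary P.tree) (hS₂ : ETree.IsEvolutionary Q.tree)
    (hlab : ETree.labelSet P.tree = ETree.labelSet Q.tree)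
    (i j : ℕ) (hi₁ : 1 ≤ i) (hi : i < P.len) (hj₁ : 1 < j) (hj : j ≤ Q.len)
    (hnon : ∀ b, 1 ≤ b → b ≤ j - 1 → ¬ Intersecting P Q i b) :
    rr (P.vert i) (Q.vert 1) =
      max (rr (P.vert i) (Q.vert j))
      (max (rr (P.vert (i + 1)) (Q.vert 1))
           (mm (P.offPath i) {Q.vert j} +
            (Finset.Icc 1 (j - 1)).sup (fun b => mm {P.vert (i + 1)} (Q.offPath b)))) :=
  rr_recurrence_G_general P Q hS₁ hS₂ i j hi₁ hi hj₁ hj hnon
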